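/- For every x ∈ ℝ^n and k ≥ 0, uᵀ f^k(x) ≥ uᵀ x + k (uᵀ c); consequently, if uᵀ c > 0 then ‖f^k(x)‖ → ∞ as k → ∞ for every x ∈ ℝ^n. -/

import Mathlib

open Matrix Filter

theorem stmt14 (n : ℕ) (hn : 2 ≤ n) (A : Matrix (Fin n) (Fin n) ℝ) (b c : Fin n → ℝ)
    (f : (Fin n → ℝ) → (Fin n → ℝ))
    (hf : ∀ x : Fin n → ℝ, f x = A.mulVec x + |x ⟨0, by omega⟩| • b + c)
    (hdm : 0 ≤ (1 - A + vecMulVec b (Pi.single (⟨0, by omega⟩ : Fin n) (1 : ℝ))).det)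
    (hdp : (1 - A - vecMulVec b (Pi.single (⟨0, by omega⟩ : Fin n) (1 : ℝ))).det ≤ 0)
    (u : Fin n → ℝ)
    (hu : u = vecMul (Pi.single (⟨0, by omega⟩ : Fin n) (1 : ℝ)) (adjugate (1 - A)))
    (huc : 0 < u ⬝ᵥ c) :
    (∀ (x : Fin n → ℝ) (k : ℕ), u ⬝ᵥ f^[k] x ≥ u ⬝ᵥ x + k * (u ⬝ᵥ c)) ∧
    (∀ x : Fin n → ℝ, Tendsto (fun k => ‖f^[k] x‖) atTop atTop) := by
  set i0 : Fin n := ⟨0, by omega⟩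
  set M : Matrix (Fin n) (Fin n) ℝ := 1 - A with hM
  -- u is row i0 of adjugate M
  have hurow : u = adjugate M i0 := by
    rw [hu, single_one_vecMul]; rfl
  -- u ⬝ᵥ w = cramer M w i0
  have hcram : ∀ w : Fin n → ℝ, u ⬝ᵥ w = (M.updateCol i0 w).det := by
    intro w
    rw [hurow]
    have h1 : adjugate M i0 ⬝ᵥ w = (adjugate M *ᵥ w) i0 := rfl
    rw [h1, ← cramer_eq_adjugate_mulVec, cramer_apply]
  -- determinant lemma expansions
  have hsplit : ∀ (s : ℝ), (M + s • vecMulVec b (Pi.single i0 1)).det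
      = M.det + s * (u ⬝ᵥ b) := by
    intro s
    have heq : M + s • vecMulVec b (Pi.single i0 1)
        = M.updateCol i0 (fun i => M i i0 + s * b i) := by
      ext i j
      simp only [updateCol_apply, Matrix.add_apply, Matrix.smul_apply, vecMulVec_apply,
        Pi.single_apply, smul_eq_mul]
      by_cases h : j = i0 <;> simp [h]
    rw [heq]
    have hadd := M.det_updateCol_add i0 (fun i => M i i0) (fun i => s * b i)
    have h2 : (M.updateCol i0 fun i => M i i0) = M := updateCol_eq_self M i0
    have h3 : (M.updateCol i0 fun i => s * b i).det = s * (M.updateCol i0 b).det := by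
      have := M.det_updateCol_smul i0 s b
      exact this
    calc (M.updateCol i0 fun i => M i i0 + s * b i).det
        = (M.updateCol i0 fun i => M i i0).det
          + (M.updateCol i0 fun i => s * b i).det := hadd
      _ = M.det + s * (u ⬝ᵥ b) := by rw [h2, h3, hcram]
  have hdm' : 0 ≤ M.det + u ⬝ᵥ b := by
    have h := hsplit 1
    simp only [one_smul, one_mul] at h
    rw [← h]; exact hdm
  have hdp' : M.det - u ⬝ᵥ b ≤ 0 := by
    have h := hsplit (-1)
    simp only [neg_smul, one_smul, neg_one_mul, ← sub_eq_add_neg] at h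
    rw [← h]; exact hdp
  -- key single-step inequality
  have hstep : ∀ x : Fin n → ℝ, u ⬝ᵥ f x ≥ u ⬝ᵥ x + u ⬝ᵥ c := by
    intro x
    have huM : u ᵥ* M = M.det • (Pi.single i0 1 : Fin n → ℝ) := by
      rw [hu, vecMul_vecMul, adjugate_mul]
      ext j
      rcases eq_or_ne j i0 with h | h
      · simp [single_vecMul, Matrix.smul_apply, Matrix.one_apply, Pi.single_apply, h]
      · simp [single_vecMul, Matrix.smul_apply, Matrix.one_apply, Pi.single_apply, h, Ne.symm h]
    have huA : u ⬝ᵥ (A *ᵥ x) = u ⬝ᵥ x - M.det * x i0 := by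
      rw [dotProduct_mulVec]
      have hA : A = 1 - M := (sub_sub_cancel 1 A).symm
      rw [hA, vecMul_sub, vecMul_one, huM, sub_dotProduct, smul_dotProduct,
        single_dotProduct, smul_eq_mul, one_mul]
    rw [hf x, dotProduct_add, dotProduct_add, dotProduct_smul, smul_eq_mul, huA]
    have key : 0 ≤ |x i0| * (u ⬝ᵥ b) - M.det * x i0 := by
      rcases abs_cases (x i0) with ⟨h1, h2⟩ | ⟨h1, h2⟩
      · rw [h1]
        have : x i0 * (u ⬝ᵥ b) - M.det * x i0 = x i0 * ((u ⬝ᵥ b) - M.det) := by ring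
        rw [this]
        exact mul_nonneg h2 (by linarith)
      · rw [h1]
        have : -x i0 * (u ⬝ᵥ b) - M.det * x i0 = (-x i0) * ((u ⬝ᵥ b) + M.det) := by ring
        rw [this]
        exact mul_nonneg (by linarith) (by linarith)
    linarith
  -- iterate
  have hiter : ∀ (x : Fin n → ℝ) (k : ℕ), u ⬝ᵥ f^[k] x ≥ u ⬝ᵥ x + k * (u ⬝ᵥ c) := by
    intro x k
    induction k with
    | zero => simp
    | succ k ih =>
      rw [Function.iterate_succ_apply']
      have := hstep (f^[k] x)
      push_cast
      push_cast at ih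
      linarith
  refine ⟨hiter, ?_⟩
  intro x
  set S : ℝ := ∑ i, |u i| with hS
  have hSpos : 0 < S := by
    by_contra h
    push_neg at h
    have hS0 : S = 0 := le_antisymm h (Finset.sum_nonneg fun i _ => abs_nonneg _)
    have hu0 : ∀ i, u i = 0 := by
      intro i
      have := (Finset.sum_eq_zero_iff_of_nonneg (fun i _ => abs_nonneg (u i))).mp hS0 i
        (Finset.mem_univ i)
      exact abs_eq_zero.mp this
    have : u ⬝ᵥ c = 0 := by
      simp [dotProduct, hu0]
    linarith
  have hbound : ∀ y : Fin n → ℝ, u ⬝ᵥ y ≤ S * ‖y‖ := by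
    intro y
    calc u ⬝ᵥ y ≤ |u ⬝ᵥ y| := le_abs_self _
      _ ≤ ∑ i, |u i * y i| := Finset.abs_sum_le_sum_abs _ _
      _ ≤ ∑ i, |u i| * ‖y‖ := by
          apply Finset.sum_le_sum
          intro i _
          rw [abs_mul]
          exact mul_le_mul_of_nonneg_left (norm_le_pi_norm y i) (abs_nonneg _)
      _ = S * ‖y‖ := by rw [← Finset.sum_mul]
  have hge : ∀ k : ℕ, (u ⬝ᵥ x + k * (u ⬝ᵥ c)) / S ≤ ‖f^[k] x‖ := by
    intro k
    rw [div_le_iff₀ hSpos]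
    calc u ⬝ᵥ x + k * (u ⬝ᵥ c) ≤ u ⬝ᵥ f^[k] x := hiter x k
      _ ≤ S * ‖f^[k] x‖ := hbound _
      _ = ‖f^[k] x‖ * S := mul_comm _ _
  have htend : Tendsto (fun k : ℕ => (u ⬝ᵥ x + k * (u ⬝ᵥ c)) / S) atTop atTop := by
    apply Tendsto.atTop_div_const hSpos
    apply tendsto_atTop_add_const_left
    exact Tendsto.atTop_mul_const huc tendsto_natCast_atTop_atTop
  exact tendsto_atTop_mono hge htend
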